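/- arXiv:2603.14649 — 9 statements merged into one kernel-verified Lean document; each statement's English description precedes it below -/
import Mathlib

section
/- Let d₁,…,dₙ be natural numbers with m = Σᵢ dᵢ, and let x₁,…,xₙ be natural numbers with 0 ≤ xᵢ ≤ dᵢ for each i and Σᵢ xᵢ = k. Then 0 ≤ Σᵢ (dᵢ - xᵢ)·(log₂ dᵢ − log₂(dᵢ - xᵢ)) ≤ k / ln 2, where terms with dᵢ = 0 or dᵢ = xᵢ are interpreted as 0. -/
open Real Finset

/-! Each summand has the form `b (log a - log b) = b log (a / b)` with `0 ≤ b ≤ a`, which lies between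
`0` (monotonicity of `log`) and `a - b` (from `log t ≤ t - 1`). Here `a - b = xᵢ`, so summing gives
`k` after dividing by `ln 2`. -/

namespace Real

variable {a b : ℝ}

lemma mul_log_sub_log_nonneg (hb : 0 ≤ b) (hba : b ≤ a) : 0 ≤ b * (log a - log b) := by
  rcases hb.eq_or_lt with rfl | hb
  · simp
  · exact mul_nonneg hb.le (sub_nonneg.2 (log_le_log hb hba))

lemma mul_log_sub_log_le_sub (hb : 0 ≤ b) (hba : b ≤ a) : b * (log a - log b) ≤ a - b := by
  rcases hb.eq_or_lt with rfl | hb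
  · simpa using hba
  · calc b * (log a - log b) = b * log (a / b) := by rw [log_div (hb.trans_le hba).ne' hb.ne']
      _ ≤ b * (a / b - 1) := by gcongr; exact log_le_sub_one_of_pos (div_pos (hb.trans_le hba) hb)
      _ = a - b := by field_simp

lemma mul_logb_sub_logb_eq {c : ℝ} : b * (logb c a - logb c b) = b * (log a - log b) / log c := by
  rw [logb, logb, ← sub_div, mul_div_assoc]

lemma mul_logb_sub_logb_nonneg {c : ℝ} (hc : 1 < c) (hb : 0 ≤ b) (hba : b ≤ a) :
    0 ≤ b * (logb c a - logb c b) := by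
  rw [mul_logb_sub_logb_eq]
  exact div_nonneg (mul_log_sub_log_nonneg hb hba) (log_pos hc).le

lemma mul_logb_sub_logb_le {c : ℝ} (hc : 1 < c) (hb : 0 ≤ b) (hba : b ≤ a) :
    b * (logb c a - logb c b) ≤ (a - b) / log c := by
  rw [mul_logb_sub_logb_eq]
  exact div_le_div_of_nonneg_right (mul_log_sub_log_le_sub hb hba) (log_pos hc).le

end Real

theorem sum_simple_bound (n k : ℕ) (d x : Fin n → ℕ)
    (hxd : ∀ i, x i ≤ d i) (hk : ∑ i, x i = k) :
    0 ≤ ∑ i, ((d i : ℝ) - x i) * (Real.logb 2 (d i) - Real.logb 2 ((d i : ℝ) - x i)) ∧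
    ∑ i, ((d i : ℝ) - x i) * (Real.logb 2 (d i) - Real.logb 2 ((d i : ℝ) - x i))
      ≤ k / Real.log 2 := by
  have hsub_nonneg (i : Fin n) : (0 : ℝ) ≤ d i - x i := sub_nonneg.2 (by exact_mod_cast hxd i)
  have hsub_le (i : Fin n) : (d i : ℝ) - x i ≤ d i := sub_le_self _ (Nat.cast_nonneg _)
  refine ⟨sum_nonneg fun i _ ↦ mul_logb_sub_logb_nonneg one_lt_two (hsub_nonneg i) (hsub_le i), ?_⟩
  calc ∑ i, ((d i : ℝ) - x i) * (logb 2 (d i) - logb 2 ((d i : ℝ) - x i))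
      ≤ ∑ i, ((d i : ℝ) - (d i - x i)) / log 2 :=
        sum_le_sum fun i _ ↦ mul_logb_sub_logb_le one_lt_two (hsub_nonneg i) (hsub_le i)
    _ = k / log 2 := by simp only [sub_sub_cancel, ← sum_div, ← hk, Nat.cast_sum]
end

section
/- Let d₁,…,dₙ ∈ ℕ with m = Σᵢ dᵢ, k ∈ ℕ, and x₁,…,xₙ ∈ ℕ with 0 ≤ xᵢ ≤ dᵢ and Σᵢ xᵢ = k. Define OPT_ENT(x) = −Σᵢ (dᵢ - xᵢ)·log₂((dᵢ - xᵢ)/(m - k)) and OPT_LIN(x) = Σᵢ xᵢ·log₂ dᵢ. Then OPT_ENT(x) − k/ln 2 ≤ (m-k)·log₂(m-k) − Σᵢ dᵢ·log₂ dᵢ + OPT_LIN(x) ≤ OPT_ENT(x). -/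
theorem generic_apx (n k m : ℕ) (d x : Fin n → ℕ)
    (hm : m = ∑ i, d i) (hk : ∑ i, x i = k)
    (hxd : ∀ i, x i ≤ d i) (hkm : k < m) :
    (-∑ i, ((d i : ℝ) - x i) * Real.logb 2 (((d i : ℝ) - x i) / ((m : ℝ) - k)))
        - k / Real.log 2
      ≤ ((m : ℝ) - k) * Real.logb 2 ((m : ℝ) - k)
          - (∑ i, (d i : ℝ) * Real.logb 2 (d i))
          + ∑ i, (x i : ℝ) * Real.logb 2 (d i) ∧
    ((m : ℝ) - k) * Real.logb 2 ((m : ℝ) - k)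
          - (∑ i, (d i : ℝ) * Real.logb 2 (d i))
          + ∑ i, (x i : ℝ) * Real.logb 2 (d i)
      ≤ -∑ i, ((d i : ℝ) - x i) * Real.logb 2 (((d i : ℝ) - x i) / ((m : ℝ) - k)) := by
  have hlog2 : (0:ℝ) < Real.log 2 := Real.log_pos one_lt_two
  set M : ℝ := (m : ℝ) - k with hM
  have hMpos : 0 < M := by
    have : (k:ℝ) < m := by exact_mod_cast hkm
    simp only [hM]; linarith
  set A : Fin n → ℝ := fun i => (d i : ℝ) - x i with hA
  have hAnn : ∀ i, 0 ≤ A i := by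
    intro i
    have : (x i : ℝ) ≤ d i := by exact_mod_cast hxd i
    simp only [hA]; linarith
  have hsumA : ∑ i, A i = M := by
    have h1 : ((m:ℕ):ℝ) = ∑ i, (d i:ℝ) := by rw [hm]; push_cast; rfl
    have h2 : ((k:ℕ):ℝ) = ∑ i, (x i:ℝ) := by rw [← hk]; push_cast; rfl
    simp only [hA, hM, Finset.sum_sub_distrib, h1, h2]
  -- rewrite entropy term
  have key1 : ∀ i ∈ Finset.univ, A i * Real.logb 2 (A i / M)
      = A i * Real.logb 2 (A i) - A i * Real.logb 2 M := by
    intro i _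
    rcases eq_or_lt_of_le (hAnn i) with h | h
    · rw [← h]; simp
    · rw [Real.logb_div h.ne' hMpos.ne']; ring
  have hE : -∑ i, A i * Real.logb 2 (A i / M)
      = M * Real.logb 2 M - ∑ i, A i * Real.logb 2 (A i) := by
    rw [Finset.sum_congr rfl key1, Finset.sum_sub_distrib, ← Finset.sum_mul, hsumA]
    ring
  -- termwise lower bound
  have key2 : ∀ i ∈ Finset.univ, A i * Real.logb 2 (A i) ≤ A i * Real.logb 2 (d i) := by
    intro i _
    rcases eq_or_lt_of_le (hAnn i) with h | h
    · rw [← h]; simp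
    · refine mul_le_mul_of_nonneg_left ?_ (hAnn i)
      refine Real.logb_le_logb_of_le one_lt_two h ?_
      have : (0:ℝ) ≤ (x i : ℝ) := by positivity
      simp only [hA] at h ⊢; linarith
  -- termwise upper bound
  have key3 : ∀ i ∈ Finset.univ, A i * Real.logb 2 (d i)
      ≤ A i * Real.logb 2 (A i) + (x i : ℝ) / Real.log 2 := by
    intro i _
    rcases eq_or_lt_of_le (hAnn i) with h | h
    · rw [← h]; simp; positivity
    · have hd : (0:ℝ) < d i := by
        have : (0:ℝ) ≤ (x i : ℝ) := by positivity
        simp only [hA] at h; linarith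
      have hlog : Real.log ((d i : ℝ) / A i) ≤ (d i : ℝ) / A i - 1 :=
        Real.log_le_sub_one_of_pos (by positivity)
      have hdiv : Real.log ((d i : ℝ) / A i) = Real.log (d i) - Real.log (A i) :=
        Real.log_div hd.ne' h.ne'
      have hkey : A i * (Real.log (d i) - Real.log (A i)) ≤ (x i : ℝ) := by
        rw [← hdiv]
        have h1 : A i * Real.log ((d i : ℝ) / A i) ≤ A i * ((d i : ℝ) / A i - 1) :=
          mul_le_mul_of_nonneg_left hlog (hAnn i)
        have h2 : A i * ((d i : ℝ) / A i - 1) = (d i : ℝ) - A i := by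
          field_simp
        have h3 : (d i : ℝ) - A i = x i := by simp [hA]
        linarith
      have hgoal : A i * Real.log (d i) / Real.log 2
          ≤ (A i * Real.log (A i) + (x i : ℝ)) / Real.log 2 := by
        gcongr
        nlinarith [hkey]
      simp only [Real.logb]
      have e1 : A i * (Real.log (d i) / Real.log 2) = A i * Real.log (d i) / Real.log 2 := by
        ring
      have e2 : A i * (Real.log (A i) / Real.log 2) + (x i : ℝ) / Real.log 2
          = (A i * Real.log (A i) + (x i : ℝ)) / Real.log 2 := by ring
      rw [e1, e2]; exact hgoal
  have hS2 : ∑ i, A i * Real.logb 2 (A i) ≤ ∑ i, A i * Real.logb 2 (d i) :=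
    Finset.sum_le_sum key2
  have hS3 : ∑ i, A i * Real.logb 2 (d i)
      ≤ ∑ i, A i * Real.logb 2 (A i) + (k:ℝ) / Real.log 2 := by
    calc ∑ i, A i * Real.logb 2 (d i)
        ≤ ∑ i, (A i * Real.logb 2 (A i) + (x i : ℝ) / Real.log 2) :=
          Finset.sum_le_sum key3
      _ = ∑ i, A i * Real.logb 2 (A i) + (k:ℝ) / Real.log 2 := by
          rw [Finset.sum_add_distrib, ← Finset.sum_div, ← Nat.cast_sum, hk]
  have hAD : ∑ i, A i * Real.logb 2 (d i)
      = ∑ i, (d i : ℝ) * Real.logb 2 (d i) - ∑ i, (x i : ℝ) * Real.logb 2 (d i) := by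
    simp [hA, sub_mul, Finset.sum_sub_distrib]
  constructor <;> linarith [hE, hS2, hS3, hAD]
end

section
/- Let C be a nonempty finite set of vectors x = (x₁,…,xₙ) ∈ ℕⁿ satisfying 0 ≤ xᵢ ≤ dᵢ and Σᵢ xᵢ = k, where d₁,…,dₙ ∈ ℕ with m = Σᵢ dᵢ > k. Let x̂ minimize OPT_LIN(x) = Σᵢ xᵢ·log₂ dᵢ over C and let x* minimize OPT_ENT(x) = −Σᵢ (dᵢ-xᵢ)·log₂((dᵢ-xᵢ)/(m-k)) over C. Then OPT_ENT(x̂) ≤ OPT_ENT(x*) + k/ln 2. -/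
/-!
Write `a i = d i - x i`, so that `∑ i, a i = m - k` on `C` and the entropy objective equals
`(m - k) log₂ (m - k) - ∑ i, a i log₂ a i`. Raising each `log₂ a i` to `log₂ d i` gives
`∑ i, a i log₂ d i = ∑ i, d i log₂ d i - OPT_LIN(x)`, which `x̂` makes smallest; raising costs at
most `x i / ln 2` per coordinate because `a log(1 + s/a) ≤ s`, and the `x̂ i` add up to `k`.
-/

open Real Finset

variable {ι : Type*}

lemma sum_mul_logb_div_sum (s : Finset ι) (a : ι → ℝ) (b : ℝ)
    (hs : ∑ j ∈ s, a j ≠ 0) :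
    ∑ i ∈ s, a i * logb b (a i / ∑ j ∈ s, a j)
      = ∑ i ∈ s, a i * logb b (a i) - (∑ j ∈ s, a j) * logb b (∑ j ∈ s, a j) := by
  rw [sum_mul, ← sum_sub_distrib]
  refine sum_congr rfl fun i _ => ?_
  rcases eq_or_ne (a i) 0 with ha | ha
  · simp [ha]
  · rw [logb_div ha hs, mul_sub]

lemma mul_logb_le_mul_logb_add {a s b : ℝ} (hb : 1 < b) (ha : 0 ≤ a) (hs : 0 ≤ s) :
    a * logb b a ≤ a * logb b (a + s) := by
  rcases ha.eq_or_lt with rfl | ha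
  · simp
  · exact mul_le_mul_of_nonneg_left (logb_le_logb_of_le hb ha (le_add_of_nonneg_right hs)) ha.le

lemma mul_log_add_sub_mul_log_le {a s : ℝ} (ha : 0 ≤ a) (hs : 0 ≤ s) :
    a * log (a + s) - a * log a ≤ s := by
  rcases ha.eq_or_lt with rfl | ha
  · simpa using hs
  · have hlog : log ((a + s) / a) ≤ (a + s) / a - 1 := log_le_sub_one_of_pos (by positivity)
    rw [log_div (by positivity) ha.ne'] at hlog
    calc a * log (a + s) - a * log a = a * (log (a + s) - log a) := by ring
      _ ≤ a * ((a + s) / a - 1) := mul_le_mul_of_nonneg_left hlog ha.le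
      _ = s := by field_simp; ring

lemma mul_logb_add_le {a s b : ℝ} (hb : 1 < b) (ha : 0 ≤ a) (hs : 0 ≤ s) :
    a * logb b (a + s) ≤ a * logb b a + s / log b := by
  have hlogb : 0 < log b := log_pos hb
  have h := div_le_div_of_nonneg_right (mul_log_add_sub_mul_log_le ha hs) hlogb.le
  simp only [logb, sub_div, mul_div_assoc] at h ⊢
  linarith

lemma sum_sub_mul_logb_sub_le_of_sum_mul_logb_le (s : Finset ι) {b : ℝ} (hb : 1 < b)
    {c x y : ι → ℝ} (hx : ∀ i ∈ s, 0 ≤ x i ∧ x i ≤ c i) (hy : ∀ i ∈ s, 0 ≤ y i ∧ y i ≤ c i)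
    (hxy : ∑ i ∈ s, x i * logb b (c i) ≤ ∑ i ∈ s, y i * logb b (c i)) :
    ∑ i ∈ s, (c i - y i) * logb b (c i - y i)
      ≤ ∑ i ∈ s, (c i - x i) * logb b (c i - x i) + (∑ i ∈ s, x i) / log b :=
  calc ∑ i ∈ s, (c i - y i) * logb b (c i - y i)
      ≤ ∑ i ∈ s, (c i - y i) * logb b (c i) := sum_le_sum fun i hi => by
        simpa using mul_logb_le_mul_logb_add hb (sub_nonneg.2 (hy i hi).2) (hy i hi).1
    _ = ∑ i ∈ s, c i * logb b (c i) - ∑ i ∈ s, y i * logb b (c i) := by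
        simp only [sub_mul, sum_sub_distrib]
    _ ≤ ∑ i ∈ s, c i * logb b (c i) - ∑ i ∈ s, x i * logb b (c i) := by linarith
    _ = ∑ i ∈ s, (c i - x i) * logb b (c i) := by simp only [sub_mul, sum_sub_distrib]
    _ ≤ ∑ i ∈ s, ((c i - x i) * logb b (c i - x i) + x i / log b) := sum_le_sum fun i hi => by
        simpa using mul_logb_add_le hb (sub_nonneg.2 (hx i hi).2) (hx i hi).1
    _ = ∑ i ∈ s, (c i - x i) * logb b (c i - x i) + (∑ i ∈ s, x i) / log b := by
        rw [sum_add_distrib, sum_div]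

lemma sum_sub_mul_logb_sub_div [Fintype ι] {c x : ι → ℕ} {m k : ℕ} (hc : ∑ i, c i = m)
    (hxk : ∑ i, x i = k) (hkm : k < m) (b : ℝ) :
    ∑ i, ((c i : ℝ) - x i) * logb b (((c i : ℝ) - x i) / ((m : ℝ) - k))
      = ∑ i, ((c i : ℝ) - x i) * logb b ((c i : ℝ) - x i) - ((m : ℝ) - k) * logb b ((m : ℝ) - k) := by
  have hsum : ∑ i, ((c i : ℝ) - x i) = (m : ℝ) - k := by
    rw [sum_sub_distrib, ← hc, ← hxk]
    push_cast
    rfl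
  rw [← hsum]
  refine sum_mul_logb_div_sum _ _ _ ?_
  rw [hsum, sub_ne_zero]
  exact_mod_cast hkm.ne'

theorem lin_minimizer_approximates_ent_general (n k m : ℕ) (d : Fin n → ℕ)
    (hm : m = ∑ i, d i) (hkm : k < m)
    (C : Finset (Fin n → ℕ))
    (hmem : ∀ x ∈ C, (∀ i, x i ≤ d i) ∧ ∑ i, x i = k)
    (xhat xstar : Fin n → ℕ) (hxhat : xhat ∈ C) (hxstar : xstar ∈ C)
    (hlin : ∀ y ∈ C, ∑ i, (xhat i : ℝ) * Real.logb 2 (d i)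
      ≤ ∑ i, (y i : ℝ) * Real.logb 2 (d i)) :
    (-∑ i, ((d i : ℝ) - xhat i) * Real.logb 2 (((d i : ℝ) - xhat i) / ((m : ℝ) - k)))
      ≤ (-∑ i, ((d i : ℝ) - xstar i) * Real.logb 2 (((d i : ℝ) - xstar i) / ((m : ℝ) - k)))
        + k / Real.log 2 := by
  obtain ⟨hxhat_le, hxhat_sum⟩ := hmem xhat hxhat
  obtain ⟨hxstar_le, hxstar_sum⟩ := hmem xstar hxstar
  rw [sum_sub_mul_logb_sub_div hm.symm hxhat_sum hkm,
    sum_sub_mul_logb_sub_div hm.symm hxstar_sum hkm]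
  have key := sum_sub_mul_logb_sub_le_of_sum_mul_logb_le univ one_lt_two
    (fun i _ => ⟨(xhat i).cast_nonneg, Nat.cast_le.2 (hxhat_le i)⟩)
    (fun i _ => ⟨(xstar i).cast_nonneg, Nat.cast_le.2 (hxstar_le i)⟩) (hlin xstar hxstar)
  have hxhat_sum' : ∑ i, (xhat i : ℝ) = k := by exact_mod_cast hxhat_sum
  rw [hxhat_sum'] at key
  linarith

theorem lin_minimizer_approximates_ent (n k m : ℕ) (d : Fin n → ℕ)
    (hm : m = ∑ i, d i) (hkm : k < m)
    (C : Finset (Fin n → ℕ)) (hC : C.Nonempty)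
    (hmem : ∀ x ∈ C, (∀ i, x i ≤ d i) ∧ ∑ i, x i = k)
    (xhat xstar : Fin n → ℕ) (hxhat : xhat ∈ C) (hxstar : xstar ∈ C)
    (hlin : ∀ y ∈ C, ∑ i, (xhat i : ℝ) * Real.logb 2 (d i)
      ≤ ∑ i, (y i : ℝ) * Real.logb 2 (d i))
    (hent : ∀ y ∈ C,
      (-∑ i, ((d i : ℝ) - xstar i) * Real.logb 2 (((d i : ℝ) - xstar i) / ((m : ℝ) - k)))
        ≤ -∑ i, ((d i : ℝ) - y i) * Real.logb 2 (((d i : ℝ) - y i) / ((m : ℝ) - k))) :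
    (-∑ i, ((d i : ℝ) - xhat i) * Real.logb 2 (((d i : ℝ) - xhat i) / ((m : ℝ) - k)))
      ≤ (-∑ i, ((d i : ℝ) - xstar i) * Real.logb 2 (((d i : ℝ) - xstar i) / ((m : ℝ) - k)))
        + k / Real.log 2 :=
  lin_minimizer_approximates_ent_general n k m d hm hkm C hmem xhat xstar hxhat hxstar hlin
end

section
/- Let x = (x₁,…,xₙ) and y = (y₁,…,yₙ) be sequences of nonnegative reals with equal sums, both sorted in nonincreasing order. Suppose x strictly dominates y, i.e., Σ_{j≤i} xⱼ ≥ Σ_{j≤i} yⱼ for all i and x ≠ y. Then H(x) < H(y), where H(z₁,…,zₙ) = Σᵢ zᵢ·log₂(S/zᵢ) with S = Σᵢ zᵢ > 0. -/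
/-!
Karamata's argument for the strictly convex function `f t = t log t`. Since
`H z = (S log S - ∑ f (z i)) / log 2`, it suffices to show `∑ f (y i) < ∑ f (x i)`.
The tangent of `f` at `y i` gives `f (x i) - f (y i) ≥ (log (y i) + 1) (x i - y i)`, strictly
when `x i ≠ y i`, and summation by parts turns `∑ (log (y i) + 1) (x i - y i)` into a sum of
nonnegative prefix sums of `x - y` weighted by the nonnegative decrements of `log (y i)`.
At the zeros of `y` the tangent slope is infinite, but the prefix sums of `x - y` vanish from the
last positive entry of `y` on, so the weights there do not matter.
-/

open Real Finset InformationTheory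

theorem sum_mul_logb_div_eq {ι : Type*} [Fintype ι] (b : ℝ) (z : ι → ℝ) {S : ℝ} (hS : S ≠ 0)
    (hzS : ∑ i, z i = S) :
    ∑ i, z i * logb b (S / z i) = (S * log S - ∑ i, z i * log (z i)) / log b := by
  have hterm (t : ℝ) : t * logb b (S / t) = (t * log S - t * log t) / log b := by
    rcases eq_or_ne t 0 with rfl | ht
    · simp
    · rw [logb, log_div hS ht]
      ring
  simp_rw [hterm, ← sum_div, sum_sub_distrib, ← sum_mul, hzS]

theorem log_add_one_mul_sub_lt {a b : ℝ} (ha : 0 < a) (hb : 0 ≤ b) (hab : b ≠ a) :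
    (log a + 1) * (b - a) < b * log b - a * log a := by
  have hgap : b * log b - a * log a - (log a + 1) * (b - a) = a * klFun (b / a) := by
    rcases hb.eq_or_lt with rfl | hb
    · simp only [klFun_apply, zero_div, zero_mul, log_zero]
      ring
    · rw [klFun_apply, log_div hb.ne' ha.ne']
      field_simp
      ring
  have hkl : 0 < klFun (b / a) :=
    (klFun_nonneg (by positivity)).lt_of_ne' fun h =>
      hab ((div_eq_one_iff_eq ha.ne').1 ((klFun_eq_zero_iff (by positivity)).1 h))
  linarith [mul_pos ha hkl]

theorem Fin.sum_mul_nonneg_of_covBy {n : ℕ} (c D : Fin n → ℝ) (hD : ∑ i, D i = 0)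
    (h : ∀ i j, i ⋖ j → 0 ≤ (c i - c j) * ∑ k ∈ Iic i, D k) :
    0 ≤ ∑ i, c i * D i := by
  set C : ℕ → ℝ := fun k => if hk : k < n then c ⟨k, hk⟩ else 0
  set E : ℕ → ℝ := fun k => if hk : k < n then D ⟨k, hk⟩ else 0
  have hE_Iic (i : Fin n) : ∑ k ∈ range (i + 1), E k = ∑ k ∈ Iic i, D k := by
    rw [Nat.range_succ_eq_Iic, ← Fin.map_valEmbedding_Iic, sum_map]
    exact sum_congr rfl fun k _ => by simp [E]
  have hCE : ∑ i, c i * D i = ∑ k ∈ range n, C k • E k := by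
    rw [← Fin.sum_univ_eq_sum_range (fun k => C k • E k)]
    simp [C, E]
  have hE : ∑ k ∈ range n, E k = 0 := by
    rw [← Fin.sum_univ_eq_sum_range E, ← hD]
    simp [E]
  rw [hCE, sum_range_by_parts, hE, smul_zero, zero_sub, neg_nonneg]
  refine sum_nonpos fun k hk => ?_
  have hk : k + 1 < n := by rw [mem_range] at hk; omega
  have hcov : (⟨k, by omega⟩ : Fin n) ⋖ ⟨k + 1, hk⟩ :=
    ⟨by simp [Fin.lt_def], fun m h1 h2 => by simp [Fin.lt_def] at h1 h2; omega⟩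
  simp only [C, dif_pos hk, dif_pos (show k < n by omega), smul_eq_mul, hE_Iic ⟨k, by omega⟩]
  rw [← neg_sub, neg_mul, neg_nonpos]
  exact h _ _ hcov

theorem sum_Iic_le_sum_Iic_of_covBy_of_eq_zero {ι : Type*} [Fintype ι] [LinearOrder ι]
    [LocallyFiniteOrderBot ι] {x y : ι → ℝ} (hx0 : ∀ i, 0 ≤ x i) (hy0 : ∀ i, 0 ≤ y i)
    (hya : Antitone y) (hsum : ∑ i, x i = ∑ i, y i) {i j : ι} (hij : i ⋖ j) (hyj : y j = 0) :
    ∑ k ∈ Iic i, x k ≤ ∑ k ∈ Iic i, y k := by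
  have hy : ∑ k ∈ Iic i, y k = ∑ k, y k := by
    refine sum_subset (subset_univ _) fun k _ hk => ?_
    have hik : i < k := by simpa using hk
    exact le_antisymm (hyj ▸ hya (hij.ge_of_gt hik)) (hy0 k)
  rw [hy, ← hsum]
  exact sum_le_sum_of_subset_of_nonneg (subset_univ _) fun k _ _ => hx0 k

theorem sum_mul_log_lt_of_strictly_dominates {n : ℕ} {x y : Fin n → ℝ}
    (hx0 : ∀ i, 0 ≤ x i) (hy0 : ∀ i, 0 ≤ y i) (hya : Antitone y)
    (hsum : ∑ i, x i = ∑ i, y i)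
    (hdom : ∀ i, ∑ j ∈ Iic i, y j ≤ ∑ j ∈ Iic i, x j) (hne : x ≠ y) :
    ∑ i, y i * log (y i) < ∑ i, x i * log (x i) := by
  -- at a zero of `y` the secant slope `log (x i)` replaces the infinite derivative
  set c : Fin n → ℝ := fun i => if y i = 0 then log (x i) else log (y i) + 1
  have hle (i : Fin n) : c i * (x i - y i) ≤ x i * log (x i) - y i * log (y i) := by
    by_cases hyi : y i = 0
    · simp [c, hyi, mul_comm]
    · simp only [c, if_neg hyi]
      rcases eq_or_ne (x i) (y i) with h | h
      · simp [h]
      · exact (log_add_one_mul_sub_lt ((hy0 i).lt_of_ne' hyi) (hx0 i) h).le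
  obtain ⟨i₀, hi₀⟩ : ∃ i, x i < y i := by
    by_contra! h
    exact hne (funext fun i => ((sum_eq_sum_iff_of_le fun i _ => h i).1 hsum.symm i
      (mem_univ i)).symm)
  have hlt : c i₀ * (x i₀ - y i₀) < x i₀ * log (x i₀) - y i₀ * log (y i₀) := by
    have hy : 0 < y i₀ := (hx0 i₀).trans_lt hi₀
    simp only [c, if_neg hy.ne']
    exact log_add_one_mul_sub_lt hy (hx0 i₀) hi₀.ne
  have habel : 0 ≤ ∑ i, c i * (x i - y i) := by
    refine Fin.sum_mul_nonneg_of_covBy c _ (by rw [sum_sub_distrib, hsum, sub_self]) ?_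
    intro i j hij
    have hP : 0 ≤ ∑ k ∈ Iic i, (x k - y k) := by
      rw [sum_sub_distrib]
      exact sub_nonneg.2 (hdom i)
    by_cases hyj : y j = 0
    · have hP0 : ∑ k ∈ Iic i, (x k - y k) = 0 := by
        have := sum_Iic_le_sum_Iic_of_covBy_of_eq_zero hx0 hy0 hya hsum hij hyj
        rw [sum_sub_distrib] at hP ⊢
        linarith
      rw [hP0, mul_zero]
    · have hyj : 0 < y j := (hy0 j).lt_of_ne' hyj
      have hyi : y j ≤ y i := hya hij.le
      simp only [c, if_neg hyj.ne', if_neg (hyj.trans_le hyi).ne']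
      exact mul_nonneg (by linarith [log_le_log hyj hyi]) hP
  have := sum_lt_sum (fun i _ => hle i) ⟨i₀, mem_univ _, hlt⟩
  rw [sum_sub_distrib] at this
  linarith

theorem domination_entropy_general (n : ℕ) (x y : Fin n → ℝ)
    (hx0 : ∀ i, 0 ≤ x i) (hy0 : ∀ i, 0 ≤ y i)
    (hya : Antitone y)
    (S : ℝ) (hS : 0 < S) (hxS : ∑ i, x i = S) (hyS : ∑ i, y i = S)
    (hdom : ∀ i : Fin n, ∑ j ∈ Finset.Iic i, y j ≤ ∑ j ∈ Finset.Iic i, x j)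
    (hne : x ≠ y) :
    ∑ i, x i * Real.logb 2 (S / x i) < ∑ i, y i * Real.logb 2 (S / y i) := by
  rw [sum_mul_logb_div_eq 2 x hS.ne' hxS, sum_mul_logb_div_eq 2 y hS.ne' hyS,
    div_lt_div_iff_of_pos_right (log_pos one_lt_two), sub_lt_sub_iff_left]
  exact sum_mul_log_lt_of_strictly_dominates hx0 hy0 hya (hxS.trans hyS.symm) hdom hne

theorem domination_entropy (n : ℕ) (x y : Fin n → ℝ)
    (hx0 : ∀ i, 0 ≤ x i) (hy0 : ∀ i, 0 ≤ y i)
    (hxa : Antitone x) (hya : Antitone y)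
    (S : ℝ) (hS : 0 < S) (hxS : ∑ i, x i = S) (hyS : ∑ i, y i = S)
    (hdom : ∀ i : Fin n, ∑ j ∈ Finset.Iic i, y j ≤ ∑ j ∈ Finset.Iic i, x j)
    (hne : x ≠ y) :
    ∑ i, x i * Real.logb 2 (S / x i) < ∑ i, y i * Real.logb 2 (S / y i) :=
  domination_entropy_general n x y hx0 hy0 hya S hS hxS hyS hdom hne
end

section
/- Let G be a finite directed graph with m ≥ 2 edges and indegree sequence (d_v)_{v∈V}, and let e = (u,w) be an edge of G with d_w < m (i.e., not all edges point to w). Define H(G) = Σ_v d_v·log₂(m/d_v). Then H(G − e) < H(G), where G − e is obtained by deleting edge e (so the indegree of w decreases by 1 and the edge count by 1). -/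
open Real Finset

lemma key_slope {a b : ℝ} (ha : 0 ≤ a) (hab : a + 1 ≤ b) :
    (a+1) * Real.log (a+1) - a * Real.log a
      < (b+1) * Real.log (b+1) - b * Real.log b := by
  have hconv := Real.strictConvexOn_mul_log
  have hb0 : (0:ℝ) ≤ b := by linarith
  have hb1 : (0:ℝ) ≤ b + 1 := by linarith
  rcases eq_or_lt_of_le hab with h | h
  · have := hconv.slope_strict_mono_adjacent (Set.mem_Ici.2 ha)
      (Set.mem_Ici.2 hb1) (show a < a+1 by linarith) (show a+1 < b+1 by linarith)
    rw [h] at this ⊢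
    have e1 : b - a = 1 := by linarith [h]
    rw [e1] at this
    have e2 : b + 1 - b = 1 := by ring
    rw [e2] at this
    simpa using this
  · have h1 := hconv.slope_strict_mono_adjacent (Set.mem_Ici.2 ha)
      (Set.mem_Ici.2 hb0) (show a < a+1 by linarith) h
    have h2 := hconv.slope_strict_mono_adjacent (Set.mem_Ici.2 (by linarith : (0:ℝ) ≤ a+1))
      (Set.mem_Ici.2 hb1) h (show b < b+1 by linarith)
    have e : a + 1 - a = 1 := by ring
    have e2 : b + 1 - b = 1 := by ring
    rw [e] at h1; rw [e2] at h2
    simp only [div_one] at h1 h2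
    calc (a+1) * Real.log (a+1) - a * Real.log a
        < (b * Real.log b - (a+1) * Real.log (a+1)) / (b - (a+1)) := h1
      _ < (b+1) * Real.log (b+1) - b * Real.log b := h2

lemma key_slope_b {a b : ℝ} (ha : 0 ≤ a) (hab : a + 1 ≤ b) :
    (a+1) * Real.logb 2 (a+1) - a * Real.logb 2 a
      < (b+1) * Real.logb 2 (b+1) - b * Real.logb 2 b := by
  have h := key_slope ha hab
  have hl : (0:ℝ) < Real.log 2 := Real.log_pos (by norm_num)
  simp only [Real.logb]
  have h2 : ((a+1)*Real.log (a+1) - a*Real.log a)/Real.log 2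
      < ((b+1)*Real.log (b+1) - b*Real.log b)/Real.log 2 :=
    (div_lt_div_iff_of_pos_right hl).mpr h
  ring_nf at h2 ⊢
  linarith

theorem entropy_decreases_on_edge_deletion (n : ℕ) (d : Fin n → ℕ) (w : Fin n)
    (m : ℕ) (hm : m = ∑ v, d v) (hm2 : 2 ≤ m)
    (hw1 : 1 ≤ d w) (hwm : d w < m) :
    ∑ v ∈ Finset.univ.erase w, (d v : ℝ) * Real.logb 2 (((m : ℝ) - 1) / d v)
        + ((d w : ℝ) - 1) * Real.logb 2 (((m : ℝ) - 1) / ((d w : ℝ) - 1))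
      < ∑ v, (d v : ℝ) * Real.logb 2 ((m : ℝ) / d v) := by
  have hm0 : (0:ℝ) < m := by positivity
  have hmne : (m:ℝ) ≠ 0 := ne_of_gt hm0
  have hm1ne : (m:ℝ) - 1 ≠ 0 := by
    have : (2:ℝ) ≤ m := by exact_mod_cast hm2
    linarith
  -- pointwise rewrites
  have hR : ∀ v : Fin n, (d v : ℝ) * Real.logb 2 ((m : ℝ) / d v)
      = (d v : ℝ) * Real.logb 2 m - (d v : ℝ) * Real.logb 2 (d v) := by
    intro v
    rcases Nat.eq_zero_or_pos (d v) with h | h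
    · simp [h]
    · rw [Real.logb_div hmne (by exact_mod_cast h.ne')]; ring
  have hL : ∀ v : Fin n, (d v : ℝ) * Real.logb 2 (((m : ℝ) - 1) / d v)
      = (d v : ℝ) * Real.logb 2 ((m:ℝ)-1) - (d v : ℝ) * Real.logb 2 (d v) := by
    intro v
    rcases Nat.eq_zero_or_pos (d v) with h | h
    · simp [h]
    · rw [Real.logb_div hm1ne (by exact_mod_cast h.ne')]; ring
  have hLw : ((d w : ℝ) - 1) * Real.logb 2 (((m : ℝ) - 1) / ((d w : ℝ) - 1))
      = ((d w : ℝ) - 1) * Real.logb 2 ((m:ℝ)-1) - ((d w : ℝ)-1) * Real.logb 2 ((d w:ℝ)-1) := by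
    rcases eq_or_lt_of_le (show (1:ℝ) ≤ (d w : ℝ) by exact_mod_cast hw1) with h | h
    · rw [← h]; simp
    · rw [Real.logb_div hm1ne (by linarith)]; ring
  rw [Finset.sum_congr rfl (fun v _ => hR v), Finset.sum_congr rfl (fun v _ => hL v), hLw]
  rw [Finset.sum_sub_distrib, Finset.sum_sub_distrib, ← Finset.sum_mul, ← Finset.sum_mul]
  have hsum : ∑ v, (d v : ℝ) = m := by rw [hm]; push_cast; ring
  have hsum' : ∑ v ∈ Finset.univ.erase w, (d v : ℝ) = (m:ℝ) - d w := by
    have : ∑ v, (d v : ℝ) = ∑ v ∈ Finset.univ.erase w, (d v : ℝ) + d w := by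
      rw [Finset.sum_erase_add _ _ (Finset.mem_univ w)]
    linarith [hsum]
  have hsplit : ∑ v, (d v : ℝ) * Real.logb 2 (d v)
      = ∑ v ∈ Finset.univ.erase w, (d v : ℝ) * Real.logb 2 (d v)
        + (d w : ℝ) * Real.logb 2 (d w) := by
    rw [Finset.sum_erase_add _ _ (Finset.mem_univ w)]
  have key : ((d w:ℝ)) * Real.logb 2 (d w) - ((d w:ℝ)-1) * Real.logb 2 ((d w:ℝ)-1)
      < (m:ℝ) * Real.logb 2 m - ((m:ℝ)-1) * Real.logb 2 ((m:ℝ)-1) := by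
    have := key_slope_b (a := (d w:ℝ)-1) (b := (m:ℝ)-1)
      (by
        have h1 : (1:ℝ) ≤ (d w:ℝ) := by exact_mod_cast hw1
        linarith)
      (by
        have h1 : (d w:ℝ) + 1 ≤ m := by exact_mod_cast hwm
        linarith)
    simpa using this
  rw [hsum, hsum', hsplit]
  nlinarith [key]
end

section
/- For any weakly connected finite directed graph G there exists a spanning tree T of G such that H(G − T) = min over all spanning forests F of G of H(G − F), where H is the unnormalized indegree entropy. -/
open Finset

variable {V : Type*} [Fintype V] [DecidableEq V]

/-- The undirected simple graph underlying a finite set of directed edges. -/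
def undirected (E : Finset (V × V)) : SimpleGraph V :=
  SimpleGraph.fromRel (fun u v => (u, v) ∈ E)

/-- `F` is a spanning forest of the digraph with edge set `E`:
a subset of edges that, ignoring orientations, is acyclic
(no loops, no antiparallel pairs, and the underlying simple graph is acyclic). -/
def IsSpanningForest (E F : Finset (V × V)) : Prop :=
  F ⊆ E ∧ (undirected F).IsAcyclic ∧ ∀ e ∈ F, e.1 ≠ e.2 ∧ (e.2, e.1) ∉ F

/-- A spanning tree is a spanning forest with `|V| - 1` edges. -/
def IsSpanningTree (E T : Finset (V × V)) : Prop :=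
  IsSpanningForest E T ∧ T.card = Fintype.card V - 1

/-- Unnormalized indegree entropy of the digraph with edge set `K`. -/
noncomputable def indegEntropy (K : Finset (V × V)) : ℝ :=
  ∑ v : V, (((K.filter (fun e => e.2 = v)).card : ℝ)) *
    Real.logb 2 ((K.card : ℝ) / ((K.filter (fun e => e.2 = v)).card : ℝ))

/-!
Deleting edges never increases `H`. Indeed `H · ln 2 = m ln m - ∑ d_v ln d_v`, and adding an edge
into `w` changes this by the increment of the convex function `x ln x` on `[m, m + 1]` minus its
increment on `[d_w, d_w + 1]`, which is nonnegative because `d_w ≤ m`. Hence a spanning forest `F`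
minimising `H(G - F)` may be enlarged to a maximal spanning forest, and in a connected graph a
maximal spanning forest is a spanning tree.
-/

section

omit [Fintype V]

def indeg (K : Finset (V × V)) (v : V) : ℕ :=
  (K.filter (fun e => e.2 = v)).card

lemma indeg_le_card (K : Finset (V × V)) (v : V) : indeg K v ≤ #K :=
  card_filter_le _ _

lemma indeg_insert_of_ne {K : Finset (V × V)} {e : V × V} {v : V} (hv : v ≠ e.2) :
    indeg (insert e K) v = indeg K v := by
  simp [indeg, filter_insert, hv.symm]

lemma indeg_insert_self {K : Finset (V × V)} {e : V × V} (he : e ∉ K) :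
    indeg (insert e K) e.2 = indeg K e.2 + 1 := by
  simp [indeg, filter_insert, he]

end

lemma sum_indeg (K : Finset (V × V)) : ∑ v, indeg K v = #K :=
  (card_eq_sum_card_fiberwise fun _ _ => mem_univ _).symm

lemma indegEntropy_eq (K : Finset (V × V)) :
    indegEntropy K =
      (#K * Real.log #K - ∑ v, (indeg K v : ℝ) * Real.log (indeg K v)) / Real.log 2 := by
  have hK : (#K : ℝ) * Real.log #K = ∑ v, (indeg K v : ℝ) * Real.log #K := by
    rw [← sum_mul, ← Nat.cast_sum, sum_indeg]
  rw [eq_div_iff (Real.log_pos one_lt_two).ne', hK, ← sum_sub_distrib, indegEntropy, sum_mul]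
  refine sum_congr rfl fun v _ => ?_
  change (indeg K v : ℝ) * Real.logb 2 (#K / indeg K v) * _ = _
  rcases (indeg K v).eq_zero_or_pos with h | h
  · simp [h]
  have hK : 0 < #K := h.trans_le (indeg_le_card K v)
  rw [Real.logb, Real.log_div (by positivity) (by positivity)]
  field_simp

lemma monotoneOn_add_one_mul_log_sub_mul_log :
    MonotoneOn (fun x : ℝ => (x + 1) * Real.log (x + 1) - x * Real.log x) (Set.Ici 0) := by
  intro x (hx : 0 ≤ x) y (hy : 0 ≤ y) hxy
  have hc := Real.convexOn_mul_log
  have key : slope (fun x : ℝ => x * Real.log x) x (x + 1)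
      ≤ slope (fun x : ℝ => x * Real.log x) (y + 1) y :=
    calc _ ≤ slope (fun x : ℝ => x * Real.log x) x (y + 1) :=
          hc.slope_mono hx ⟨Set.mem_Ici.2 (by linarith), by simp⟩
            ⟨Set.mem_Ici.2 (by linarith), by simp; linarith⟩ (by linarith)
      _ = slope (fun x : ℝ => x * Real.log x) (y + 1) x := slope_comm _ _ _
      _ ≤ _ := hc.slope_mono (Set.mem_Ici.2 (by linarith)) ⟨hx, by simp; linarith⟩
            ⟨hy, by simp⟩ hxy
  simp only [slope_def_field] at key
  norm_num at key
  linarith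

lemma indegEntropy_le_insert {K : Finset (V × V)} {e : V × V} (he : e ∉ K) :
    indegEntropy K ≤ indegEntropy (insert e K) := by
  rw [indegEntropy_eq, indegEntropy_eq]
  gcongr ?_ / _
  set f : ℝ → ℝ := fun x => x * Real.log x
  have hdiff : ∑ v, f (indeg (insert e K) v) - ∑ v, f (indeg K v)
      = f (indeg K e.2 + 1) - f (indeg K e.2) := by
    rw [← sum_sub_distrib, Fintype.sum_eq_single e.2 fun v hv => by
      rw [indeg_insert_of_ne hv, sub_self], indeg_insert_self he]
    push_cast; rfl
  have hstep := monotoneOn_add_one_mul_log_sub_mul_log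
    (Set.mem_Ici.2 (Nat.cast_nonneg (indeg K e.2))) (Set.mem_Ici.2 (Nat.cast_nonneg #K))
    (by exact_mod_cast indeg_le_card K e.2)
  rw [card_insert_of_notMem he]
  push_cast
  simp only [f] at hdiff hstep
  linarith

lemma indegEntropy_mono : Monotone (indegEntropy : Finset (V × V) → ℝ) :=
  monotone_iff_forall_le_insert.mpr fun _ _ => indegEntropy_le_insert

section

omit [Fintype V] [DecidableEq V]

lemma SimpleGraph.Reachable.of_forall_adj_reachable {G H : SimpleGraph V}
    (h : ∀ a b, G.Adj a b → H.Reachable a b) {u v : V} (huv : G.Reachable u v) :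
    H.Reachable u v := by
  rw [SimpleGraph.reachable_iff_reflTransGen] at huv ⊢
  exact Relation.reflTransGen_closed
    (fun a b hab => (H.reachable_iff_reflTransGen a b).1 (h a b hab)) _ _ huv

@[simp]
lemma undirected_adj {F : Finset (V × V)} {x y : V} :
    (undirected F).Adj x y ↔ x ≠ y ∧ ((x, y) ∈ F ∨ (y, x) ∈ F) :=
  SimpleGraph.fromRel_adj _ _ _

lemma card_edgeFinset_undirected {F : Finset (V × V)}
    (hF : ∀ e ∈ F, e.1 ≠ e.2 ∧ (e.2, e.1) ∉ F) [Fintype (undirected F).edgeSet] :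
    #(undirected F).edgeFinset = #F := by
  symm
  refine card_bij (fun e _ => s(e.1, e.2)) (fun e he => ?_) (fun e₁ h₁ e₂ h₂ h => ?_) ?_
  · simpa using ⟨(hF e he).1, Or.inl he⟩
  · rcases Sym2.eq_iff.mp h with ⟨h1, h2⟩ | ⟨h1, h2⟩
    · exact Prod.ext h1 h2
    · exact absurd (by rw [h1, h2]; exact h₂) (hF e₁ h₁).2
  · rintro ⟨x, y⟩ hxy
    rcases (by simpa using hxy : x ≠ y ∧ ((x, y) ∈ F ∨ (y, x) ∈ F)).2 with h | h
    · exact ⟨(x, y), h, rfl⟩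
    · exact ⟨(y, x), h, Sym2.eq_swap⟩

lemma isSpanningForest_empty (E : Finset (V × V)) : IsSpanningForest E ∅ := by
  refine ⟨empty_subset E, ?_, by simp⟩
  rw [show undirected (∅ : Finset (V × V)) = ⊥ by ext; simp]
  exact SimpleGraph.isAcyclic_bot

end

section

omit [Fintype V]

lemma undirected_insert (F : Finset (V × V)) (a b : V) :
    undirected (insert (a, b) F) = undirected F ⊔ SimpleGraph.edge a b := by
  ext x y
  simp only [undirected_adj, SimpleGraph.sup_adj, SimpleGraph.edge_adj, mem_insert,
    Prod.mk.injEq]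
  tauto

lemma IsSpanningForest.insert_of_not_reachable {E F : Finset (V × V)}
    (hF : IsSpanningForest E F) {a b : V} (hab : (a, b) ∈ E)
    (hnr : ¬(undirected F).Reachable a b) :
    IsSpanningForest E (insert (a, b) F) := by
  obtain ⟨hFE, hacyc, hloop⟩ := hF
  have hne : a ≠ b := fun h => hnr (h ▸ SimpleGraph.Reachable.refl a)
  have hnadj : (a, b) ∉ F ∧ (b, a) ∉ F := by
    constructor <;> intro h <;> exact hnr (SimpleGraph.Adj.reachable (by simp [hne, h]))
  refine ⟨insert_subset hab hFE, ?_, ?_⟩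
  · rw [undirected_insert]
    exact hacyc.sup_edge_of_not_reachable hnr
  · simp only [mem_insert, forall_eq_or_imp, Prod.mk.injEq]
    refine ⟨⟨hne, by tauto⟩, fun e he => ⟨(hloop e he).1, ?_⟩⟩
    rintro (⟨h1, h2⟩ | h)
    · exact hnadj.2 (by rwa [← h1, ← h2])
    · exact (hloop e he).2 h

lemma reachable_of_maximal_isSpanningForest {E F : Finset (V × V)}
    (hF : Maximal (IsSpanningForest E) F) {a b : V} (hab : (a, b) ∈ E) :
    (undirected F).Reachable a b := by
  by_contra hnr
  have hins : insert (a, b) F = F :=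
    hF.eq_of_ge (hF.prop.insert_of_not_reachable hab hnr) (subset_insert _ _)
  have hne : a ≠ b := fun h => hnr (h ▸ .refl a)
  exact hnr (undirected_adj.2 ⟨hne, .inl (hins ▸ mem_insert_self _ _)⟩).reachable

lemma connected_of_maximal_isSpanningForest {E F : Finset (V × V)}
    (hconn : (undirected E).Connected) (hF : Maximal (IsSpanningForest E) F) :
    (undirected F).Connected := by
  have := hconn.nonempty
  refine ⟨fun u v => (hconn.preconnected u v).of_forall_adj_reachable fun a b hab => ?_⟩
  rcases (undirected_adj.1 hab).2 with h | h
  · exact reachable_of_maximal_isSpanningForest hF h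
  · exact (reachable_of_maximal_isSpanningForest hF h).symm

end

omit [DecidableEq V] in
lemma IsSpanningForest.isSpanningTree_of_connected {E F : Finset (V × V)}
    (hF : IsSpanningForest E F) (hconn : (undirected F).Connected) : IsSpanningTree E F := by
  classical
  have hcard := SimpleGraph.IsTree.card_edgeFinset ⟨hconn, hF.2.1⟩
  rw [card_edgeFinset_undirected hF.2.2] at hcard
  exact ⟨hF, by omega⟩

theorem exists_optimal_spanning_tree (E : Finset (V × V))
    (hconn : (undirected E).Connected) :
    ∃ T, IsSpanningTree E T ∧
      ∀ F, IsSpanningForest E F → indegEntropy (E \ T) ≤ indegEntropy (E \ F) := by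
  obtain ⟨M, hM, hM_min⟩ := Set.exists_min_image {F | IsSpanningForest E F}
    (fun F => indegEntropy (E \ F)) (Set.toFinite _) ⟨∅, isSpanningForest_empty E⟩
  obtain ⟨T, hMT, hT⟩ := Finite.exists_le_maximal hM
  refine ⟨T, hT.prop.isSpanningTree_of_connected (connected_of_maximal_isSpanningForest hconn hT),
    fun F hF => ?_⟩
  exact (indegEntropy_mono (sdiff_le_sdiff_left hMT)).trans (hM_min F hF)
end

section
/- Let d₁,…,dₙ ∈ ℕ with m = Σᵢ dᵢ, and x₁,…,xₙ ∈ ℕ with 0 ≤ xᵢ ≤ dᵢ, Σᵢ xᵢ = k, and m > k. Then |H(d₁−x₁,…,dₙ−xₙ) − H(d₁,…,dₙ) − Σᵢ xᵢ·log₂(dᵢ/m)| ≤ 2k/ln 2, where H(z₁,…,zₙ) = −Σᵢ zᵢ·log₂(zᵢ/S) with S the sum of the zᵢ. -/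
/-!
Put `y = d - x`, `Y = m - k`. Measured in nats, the quantity inside the absolute value is exactly
`∑ yᵢ log (dᵢ / yᵢ) - Y log (m / Y)`, and each piece has the shape `y log (a / y)` with
`0 ≤ y ≤ a`, which lies in `[0, a - y]` by `log t ≤ t - 1`. Hence the first piece is in `[0, k]`
and the second in `[-k, 0]`, so its absolute value is at most `k` nats, i.e. `k / ln 2` bits.
-/

open Finset Real

lemma mul_log_div_nonneg_of_le {a y : ℝ} (hy : 0 ≤ y) (hya : y ≤ a) :
    0 ≤ y * log (a / y) := by
  rcases hy.eq_or_lt with rfl | hy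
  · simp
  exact mul_nonneg hy.le (log_nonneg ((one_le_div hy).2 hya))

lemma mul_log_div_le_sub {a y : ℝ} (hy : 0 ≤ y) (hya : y ≤ a) :
    y * log (a / y) ≤ a - y := by
  rcases hy.eq_or_lt with rfl | hy
  · simpa using hya
  calc y * log (a / y) ≤ y * (a / y - 1) :=
        mul_le_mul_of_nonneg_left (log_le_sub_one_of_pos (div_pos (hy.trans_le hya) hy)) hy.le
    _ = a - y := by field_simp

noncomputable def entropy {ι : Type*} [Fintype ι] (z : ι → ℝ) : ℝ :=
  -∑ i, z i * log (z i / ∑ j, z j)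

section EntropyChange

variable {ι : Type*} [Fintype ι] {d x : ι → ℝ}

lemma entropy_sub_sub_linear_eq (hx : ∀ i, 0 ≤ x i) (hxd : ∀ i, x i ≤ d i) :
    entropy (d - x) - entropy d - ∑ i, x i * log (d i / ∑ j, d j)
      = ∑ i, (d i - x i) * log (d i / (d i - x i))
        - (∑ i, (d i - x i)) * log ((∑ i, d i) / ∑ i, (d i - x i)) := by
  simp only [entropy, Pi.sub_apply]
  set M := ∑ i, d i
  set Y := ∑ i, (d i - x i)
  have hYM : Y ≤ M := sum_le_sum fun i _ => sub_le_self _ (hx i)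
  have term (i : ι) : d i * log (d i / M) - x i * log (d i / M)
      - (d i - x i) * log ((d i - x i) / Y)
      = (d i - x i) * log (d i / (d i - x i)) - (d i - x i) * log (M / Y) := by
    rcases (sub_nonneg.2 (hxd i)).eq_or_lt with hy | hy
    · rw [show d i = x i by linarith, sub_self]; ring
    have hyY : d i - x i ≤ Y :=
      single_le_sum (f := fun j => d j - x j) (fun j _ => sub_nonneg.2 (hxd j)) (mem_univ i)
    have hd : 0 < d i := by linarith [hx i]
    rw [log_div hd.ne' (by linarith), log_div hy.ne' (by linarith), log_div hd.ne' hy.ne',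
      log_div (by linarith) (by linarith)]
    ring
  rw [sum_mul, ← sum_sub_distrib, ← sum_congr rfl fun i _ => term i, sum_sub_distrib,
    sum_sub_distrib]
  ring

theorem abs_entropy_sub_sub_linear_le (hx : ∀ i, 0 ≤ x i) (hxd : ∀ i, x i ≤ d i) :
    |entropy (d - x) - entropy d - ∑ i, x i * log (d i / ∑ j, d j)| ≤ ∑ i, x i := by
  have hy (i : ι) : 0 ≤ d i - x i := sub_nonneg.2 (hxd i)
  have hYM : ∑ i, (d i - x i) ≤ ∑ i, d i := sum_le_sum fun i _ => sub_le_self _ (hx i)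
  have hA₀ : 0 ≤ ∑ i, (d i - x i) * log (d i / (d i - x i)) :=
    sum_nonneg fun i _ => mul_log_div_nonneg_of_le (hy i) (sub_le_self _ (hx i))
  have hA : ∑ i, (d i - x i) * log (d i / (d i - x i)) ≤ ∑ i, x i :=
    (sum_le_sum fun i _ => mul_log_div_le_sub (hy i) (sub_le_self _ (hx i))).trans_eq
      (sum_congr rfl fun i _ => sub_sub_cancel _ _)
  have hB₀ := mul_log_div_nonneg_of_le (sum_nonneg fun i _ => hy i) hYM
  have hB := (mul_log_div_le_sub (sum_nonneg fun i _ => hy i) hYM).trans_eq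
    (by rw [sum_sub_distrib, sub_sub_cancel])
  rw [entropy_sub_sub_linear_eq hx hxd, abs_le]
  constructor <;> linarith

end EntropyChange

theorem entropy_change_linear_apx_general (n k m : ℕ) (d x : Fin n → ℕ)
    (hm : m = ∑ i, d i) (hk : ∑ i, x i = k)
    (hxd : ∀ i, x i ≤ d i) :
    |(-∑ i, ((d i : ℝ) - x i) * Real.logb 2 (((d i : ℝ) - x i) / ((m : ℝ) - k)))
      - (-∑ i, (d i : ℝ) * Real.logb 2 ((d i : ℝ) / m))
      - ∑ i, (x i : ℝ) * Real.logb 2 ((d i : ℝ) / m)|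
    ≤ 2 * k / Real.log 2 := by
  have hM : (m : ℝ) = ∑ i, (d i : ℝ) := by rw [hm]; push_cast; rfl
  have hK : (k : ℝ) = ∑ i, (x i : ℝ) := by rw [← hk]; push_cast; rfl
  have hMK : (m : ℝ) - k = ∑ i, ((d i : ℝ) - x i) := by rw [hM, hK, sum_sub_distrib]
  have hlog2 : 0 < log 2 := log_pos one_lt_two
  have hbound := abs_entropy_sub_sub_linear_le (d := fun i => (d i : ℝ)) (x := fun i => (x i : ℝ))
    (fun i => Nat.cast_nonneg _) (fun i => Nat.cast_le.2 (hxd i))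
  rw [← hK] at hbound
  calc _ = |entropy ((fun i => (d i : ℝ)) - fun i => (x i : ℝ)) - entropy (fun i => (d i : ℝ))
          - ∑ i, (x i : ℝ) * log (d i / ∑ j, (d j : ℝ))| / log 2 := by
        rw [← abs_of_pos hlog2, ← abs_div, hMK, hM]
        simp only [entropy, logb, Pi.sub_apply, ← mul_div_assoc, ← sum_div, ← neg_div, ← sub_div]
    _ ≤ k / log 2 := by gcongr
    _ ≤ 2 * k / log 2 := by gcongr; linarith [(Nat.cast_nonneg k : (0 : ℝ) ≤ k)]

theorem entropy_change_linear_apx (n k m : ℕ) (d x : Fin n → ℕ)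
    (hm : m = ∑ i, d i) (hk : ∑ i, x i = k)
    (hxd : ∀ i, x i ≤ d i) (hkm : k < m) :
    |(-∑ i, ((d i : ℝ) - x i) * Real.logb 2 (((d i : ℝ) - x i) / ((m : ℝ) - k)))
      - (-∑ i, (d i : ℝ) * Real.logb 2 ((d i : ℝ) / m))
      - ∑ i, (x i : ℝ) * Real.logb 2 ((d i : ℝ) / m)|
    ≤ 2 * k / Real.log 2 :=
  entropy_change_linear_apx_general n k m d x hm hk hxd
end

section
/- With weights w(i,j) = −log₂(d_j/m) on the edges of a weakly connected directed graph G (where d_j is the indegree of j and m the number of edges, m > n−1), for every spanning tree T of G we have |H(G−T) − H(G) + Σ_{(i,j)∈T} w(i,j)| ≤ 2n/ln 2, where H denotes unnormalized indegree entropy. -/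
open Finset

variable {V : Type*} [Fintype V] [DecidableEq V]

/-- Key inequality: for `0 ≤ a ≤ b`, `a * log (b/a) ≤ b - a`. -/
lemma aux_mul_log_div_le {a b : ℝ} (ha : 0 ≤ a) (hab : a ≤ b) :
    a * Real.log (b / a) ≤ b - a := by
  rcases eq_or_lt_of_le ha with h | h
  · simp [← h]; linarith
  · have hb : 0 < b := lt_of_lt_of_le h hab
    have hlog := Real.log_le_sub_one_of_pos (div_pos hb h)
    have h2 : a * Real.log (b / a) ≤ a * (b / a - 1) :=
      mul_le_mul_of_nonneg_left hlog (le_of_lt h)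
    have h3 : a * (b / a - 1) = b - a := by field_simp
    linarith

lemma aux_mul_log_div_nonneg {a b : ℝ} (ha : 0 ≤ a) (hab : a ≤ b) :
    0 ≤ a * Real.log (b / a) := by
  rcases eq_or_lt_of_le ha with h | h
  · simp [← h]
  · exact mul_nonneg ha (Real.log_nonneg ((one_le_div h).mpr hab))

theorem tree_extraction_savings (E : Finset (V × V))
    (hconn : (undirected E).Connected)
    (hm : Fintype.card V - 1 < E.card)
    (T : Finset (V × V)) (hT : IsSpanningTree E T) :
    |indegEntropy (E \ T) - indegEntropy E +
        ∑ e ∈ T, -(Real.logb 2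
          (((E.filter (fun f => f.2 = e.2)).card : ℝ) / (E.card : ℝ)))|
      ≤ 2 * (Fintype.card V : ℝ) / Real.log 2 := by
  obtain ⟨⟨hTE, -, -⟩, hTcard⟩ := hT
  have hlog2 : (0:ℝ) < Real.log 2 := Real.log_pos (by norm_num)
  set n := Fintype.card V with hn
  -- degree functions
  set d : V → ℕ := fun v => (E.filter (fun e => e.2 = v)).card with hd
  set t : V → ℕ := fun v => (T.filter (fun e => e.2 = v)).card with ht
  set d' : V → ℕ := fun v => ((E \ T).filter (fun e => e.2 = v)).card with hd'
  have htled : ∀ v, t v ≤ d v := fun v =>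
    card_le_card (filter_subset_filter _ hTE)
  have hfilter_sdiff : ∀ v, (E \ T).filter (fun e => e.2 = v)
      = E.filter (fun e => e.2 = v) \ T.filter (fun e => e.2 = v) := by
    intro v; ext e; simp only [mem_filter, mem_sdiff]; tauto
  have hd'eq : ∀ v, d' v = d v - t v := by
    intro v
    simp only [hd', hfilter_sdiff]
    exact card_sdiff_of_subset (filter_subset_filter _ hTE)
  have hd'cast : ∀ v, (d' v : ℝ) = (d v : ℝ) - (t v : ℝ) := by
    intro v; rw [hd'eq v, Nat.cast_sub (htled v)]
  have hd'led : ∀ v, d' v ≤ d v := fun v => by rw [hd'eq v]; omega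
  -- cardinalities
  set m := E.card with hmE
  set m' := (E \ T).card with hm'E
  have hTm : T.card ≤ m := card_le_card hTE
  have hm'eq : m' = m - T.card := card_sdiff_of_subset hTE
  have hm0 : 0 < m := lt_of_le_of_lt (Nat.zero_le _) hm
  have hm'0 : 0 < m' := by omega
  have hm'cast : (m' : ℝ) = (m : ℝ) - (T.card : ℝ) := by
    rw [hm'eq, Nat.cast_sub hTm]
  -- sums of degrees
  have hsum_t : ∑ v : V, t v = T.card :=
    (card_eq_sum_card_fiberwise (f := Prod.snd) (fun e _ => mem_univ _)).symm
  have hsum_d' : ∑ v : V, d' v = m' :=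
    (card_eq_sum_card_fiberwise (f := Prod.snd) (fun e _ => mem_univ _)).symm
  -- rewrite the tree sum fiberwise
  have htree : ∑ e ∈ T, -(Real.logb 2 ((d e.2 : ℝ) / (m : ℝ)))
      = ∑ v : V, (t v : ℝ) * Real.logb 2 ((m : ℝ) / (d v : ℝ)) := by
    rw [← Finset.sum_fiberwise' T Prod.snd
      (fun v => -(Real.logb 2 ((d v : ℝ) / (m : ℝ))))]
    refine Finset.sum_congr rfl fun v _ => ?_
    rw [Finset.sum_const]
    have : -(Real.logb 2 ((d v : ℝ) / (m : ℝ)))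
        = Real.logb 2 ((m : ℝ) / (d v : ℝ)) := by
      rw [← Real.logb_inv, inv_div]
    rw [this]
    simp [ht, mul_comm]
  -- main per-vertex identity
  have hkey : ∀ v : V,
      (d' v : ℝ) * Real.logb 2 ((m' : ℝ) / (d' v : ℝ))
        - (d v : ℝ) * Real.logb 2 ((m : ℝ) / (d v : ℝ))
        + (t v : ℝ) * Real.logb 2 ((m : ℝ) / (d v : ℝ))
      = (d' v : ℝ) * Real.logb 2 ((m' : ℝ) / (m : ℝ))
        + (d' v : ℝ) * Real.logb 2 ((d v : ℝ) / (d' v : ℝ)) := by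
    intro v
    have hstep : (d' v : ℝ) * Real.logb 2 ((m' : ℝ) / (d' v : ℝ))
        - (d v : ℝ) * Real.logb 2 ((m : ℝ) / (d v : ℝ))
        + (t v : ℝ) * Real.logb 2 ((m : ℝ) / (d v : ℝ))
        = (d' v : ℝ) * (Real.logb 2 ((m' : ℝ) / (d' v : ℝ))
            - Real.logb 2 ((m : ℝ) / (d v : ℝ))) := by
      rw [hd'cast v]; ring
    rw [hstep]
    rcases Nat.eq_zero_or_pos (d' v) with h0 | hpos
    · simp [h0]
    · have hd'R : (0:ℝ) < (d' v : ℝ) := by exact_mod_cast hpos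
      have hdR : (0:ℝ) < (d v : ℝ) := by
        exact_mod_cast lt_of_lt_of_le hpos (hd'led v)
      have hmR : (0:ℝ) < (m : ℝ) := by exact_mod_cast hm0
      have hm'R : (0:ℝ) < (m' : ℝ) := by exact_mod_cast hm'0
      rw [Real.logb_div (ne_of_gt hm'R) (ne_of_gt hd'R),
        Real.logb_div (ne_of_gt hmR) (ne_of_gt hdR),
        Real.logb_div (ne_of_gt hm'R) (ne_of_gt hmR),
        Real.logb_div (ne_of_gt hdR) (ne_of_gt hd'R)]
      ring
  -- rewrite the whole expression
  have hX : indegEntropy (E \ T) - indegEntropy E +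
        ∑ e ∈ T, -(Real.logb 2 ((d e.2 : ℝ) / (m : ℝ)))
      = (m' : ℝ) * Real.logb 2 ((m' : ℝ) / (m : ℝ))
        + ∑ v : V, (d' v : ℝ) * Real.logb 2 ((d v : ℝ) / (d' v : ℝ)) := by
    rw [htree]
    unfold indegEntropy
    rw [← Finset.sum_sub_distrib, ← Finset.sum_add_distrib]
    have : ∀ v : V,
        (d' v : ℝ) * Real.logb 2 ((m' : ℝ) / (d' v : ℝ))
          - (d v : ℝ) * Real.logb 2 ((m : ℝ) / (d v : ℝ))
          + (t v : ℝ) * Real.logb 2 ((m : ℝ) / (d v : ℝ))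
        = (d' v : ℝ) * Real.logb 2 ((m' : ℝ) / (m : ℝ))
          + (d' v : ℝ) * Real.logb 2 ((d v : ℝ) / (d' v : ℝ)) := hkey
    calc ∑ v : V, ((d' v : ℝ) * Real.logb 2 ((m' : ℝ) / (d' v : ℝ))
          - (d v : ℝ) * Real.logb 2 ((m : ℝ) / (d v : ℝ))
          + (t v : ℝ) * Real.logb 2 ((m : ℝ) / (d v : ℝ)))
        = ∑ v : V, ((d' v : ℝ) * Real.logb 2 ((m' : ℝ) / (m : ℝ))
          + (d' v : ℝ) * Real.logb 2 ((d v : ℝ) / (d' v : ℝ))) :=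
          Finset.sum_congr rfl fun v _ => hkey v
      _ = (∑ v : V, (d' v : ℝ)) * Real.logb 2 ((m' : ℝ) / (m : ℝ))
          + ∑ v : V, (d' v : ℝ) * Real.logb 2 ((d v : ℝ) / (d' v : ℝ)) := by
          rw [Finset.sum_add_distrib, Finset.sum_mul]
      _ = (m' : ℝ) * Real.logb 2 ((m' : ℝ) / (m : ℝ))
          + ∑ v : V, (d' v : ℝ) * Real.logb 2 ((d v : ℝ) / (d' v : ℝ)) := by
          rw [← Nat.cast_sum, hsum_d']
  rw [hX]
  -- bounds on the first term A
  have hmR : (0:ℝ) < (m : ℝ) := by exact_mod_cast hm0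
  have hm'R : (0:ℝ) < (m' : ℝ) := by exact_mod_cast hm'0
  have hm'leM : (m' : ℝ) ≤ (m : ℝ) := by
    exact_mod_cast card_le_card (sdiff_subset)
  have hA_le : (m' : ℝ) * Real.logb 2 ((m' : ℝ) / (m : ℝ)) ≤ 0 := by
    apply mul_nonpos_of_nonneg_of_nonpos (le_of_lt hm'R)
    apply Real.logb_nonpos (by norm_num)
      (div_nonneg (le_of_lt hm'R) (le_of_lt hmR))
      ((div_le_one hmR).mpr hm'leM)
  have hA_ge : -((T.card : ℝ) / Real.log 2)
      ≤ (m' : ℝ) * Real.logb 2 ((m' : ℝ) / (m : ℝ)) := by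
    have h1 : (m' : ℝ) * Real.log ((m : ℝ) / (m' : ℝ)) ≤ (m : ℝ) - (m' : ℝ) :=
      aux_mul_log_div_le (le_of_lt hm'R) hm'leM
    have h2 : Real.logb 2 ((m' : ℝ) / (m : ℝ))
        = -(Real.log ((m : ℝ) / (m' : ℝ)) / Real.log 2) := by
      rw [Real.logb, show (m':ℝ)/(m:ℝ) = ((m:ℝ)/(m':ℝ))⁻¹ by rw [inv_div],
        Real.log_inv, neg_div]
    rw [h2]
    have h4 : (m' : ℝ) * Real.log ((m:ℝ)/(m':ℝ)) ≤ (T.card : ℝ) := by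
      calc (m' : ℝ) * Real.log ((m:ℝ)/(m':ℝ)) ≤ (m:ℝ) - (m':ℝ) := h1
        _ = (T.card : ℝ) := by rw [hm'cast]; ring
    have h5 : (m' : ℝ) * -(Real.log ((m:ℝ)/(m':ℝ)) / Real.log 2)
        = -(((m':ℝ) * Real.log ((m:ℝ)/(m':ℝ))) / Real.log 2) := by ring
    rw [h5, neg_le_neg_iff]
    gcongr
  -- bounds on the sum B
  have hB_nonneg : 0 ≤ ∑ v : V, (d' v : ℝ) * Real.logb 2 ((d v : ℝ) / (d' v : ℝ)) := by
    apply Finset.sum_nonneg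
    intro v _
    have : 0 ≤ (d' v : ℝ) * Real.log ((d v : ℝ) / (d' v : ℝ)) :=
      aux_mul_log_div_nonneg (Nat.cast_nonneg _) (by exact_mod_cast hd'led v)
    rw [Real.logb, ← mul_div_assoc]
    exact div_nonneg this (le_of_lt hlog2)
  have hB_le : ∑ v : V, (d' v : ℝ) * Real.logb 2 ((d v : ℝ) / (d' v : ℝ))
      ≤ (T.card : ℝ) / Real.log 2 := by
    have hstep : ∀ v : V, (d' v : ℝ) * Real.logb 2 ((d v : ℝ) / (d' v : ℝ))
        ≤ (t v : ℝ) / Real.log 2 := by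
      intro v
      have h1 : (d' v : ℝ) * Real.log ((d v : ℝ) / (d' v : ℝ))
          ≤ (d v : ℝ) - (d' v : ℝ) :=
        aux_mul_log_div_le (Nat.cast_nonneg _) (by exact_mod_cast hd'led v)
      have h2 : (d v : ℝ) - (d' v : ℝ) = (t v : ℝ) := by
        rw [hd'cast v]; ring
      rw [Real.logb, ← mul_div_assoc]
      rw [div_le_div_iff₀ hlog2 hlog2]
      nlinarith
    calc ∑ v : V, (d' v : ℝ) * Real.logb 2 ((d v : ℝ) / (d' v : ℝ))
        ≤ ∑ v : V, (t v : ℝ) / Real.log 2 :=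
          Finset.sum_le_sum fun v _ => hstep v
      _ = (T.card : ℝ) / Real.log 2 := by
          rw [← Finset.sum_div, ← Nat.cast_sum, hsum_t]
  -- conclude
  have hTn : (T.card : ℝ) ≤ 2 * (n : ℝ) := by
    have : T.card ≤ n := by omega
    have h2 : (T.card : ℝ) ≤ (n : ℝ) := by exact_mod_cast this
    have : (0:ℝ) ≤ (n : ℝ) := Nat.cast_nonneg _
    linarith
  rw [abs_le]
  constructor
  · have : -(2 * (n : ℝ) / Real.log 2) ≤ -((T.card : ℝ) / Real.log 2) := by
      rw [neg_le_neg_iff, div_le_div_iff₀ hlog2 hlog2]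
      nlinarith
    linarith
  · have : (T.card : ℝ) / Real.log 2 ≤ 2 * (n : ℝ) / Real.log 2 := by
      rw [div_le_div_iff₀ hlog2 hlog2]
      nlinarith
    linarith
end

section
/- Let r ≥ 2 be an integer, m' a positive integer, and consider nonincreasing sequences of natural numbers d₁ ≥ d₂ ≥ … ≥ d_N with Σᵢ dᵢ = m' and dᵢ ≤ r for all i. Among all such sequences that contain exactly ℓ entries equal to r, the sequence minimizing H(d₁,…,d_N) = Σᵢ dᵢ·log₂(m'/dᵢ) is (r,…,r, r−1,…,r−1, d₀, 0,…,0), consisting of ℓ copies of r, ⌊(m'−rℓ)/(r−1)⌋ copies of r−1, one entry d₀ equal to the remainder of (m'−rℓ) modulo (r−1), and zeros (assuming N is large enough to accommodate this sequence). -/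
open Finset

noncomputable def entG (n : ℕ) : ℝ := (n : ℝ) * Real.logb 2 (n : ℝ)

noncomputable def entD (k : ℕ) : ℝ := entG (k + 1) - entG k

lemma entG_zero : entG 0 = 0 := by simp [entG]

lemma entG_telescope (n : ℕ) : ∑ k ∈ range n, entD k = entG n := by
  simp only [entD]
  rw [Finset.sum_range_sub entG, entG_zero, sub_zero]

lemma entD_mono (k : ℕ) : entD k ≤ entD (k + 1) := by
  have hcv : ConvexOn ℝ (Set.Ici (0:ℝ)) (fun x => x * Real.log x) :=
    Real.strictConvexOn_mul_log.convexOn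
  have h := hcv.slope_mono_adjacent (x := (k:ℝ)) (y := (k+1:ℕ)) (z := (k+2:ℕ))
    (by simp) (by simp [Set.mem_Ici]; positivity)
    (by push_cast; linarith) (by push_cast; linarith)
  have h2 : ((k:ℝ)+1) * Real.log ((k:ℝ)+1) - k * Real.log k ≤
      ((k:ℝ)+2) * Real.log ((k:ℝ)+2) - ((k:ℝ)+1) * Real.log ((k:ℝ)+1) := by
    have e1 : ((k+1:ℕ):ℝ) - (k:ℝ) = 1 := by push_cast; ring
    have e2 : ((k+2:ℕ):ℝ) - ((k+1:ℕ):ℝ) = 1 := by push_cast; ring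
    rw [e1, e2, div_one, div_one] at h
    push_cast at h ⊢; linarith
  have hlog2 : (0:ℝ) < Real.log 2 := Real.log_pos (by norm_num)
  simp only [entD, entG, Real.logb]
  push_cast
  simp only [mul_div_assoc']
  rw [div_sub_div_same, div_sub_div_same, div_le_div_iff_of_pos_right hlog2]
  have e : (k:ℝ)+1+1 = (k:ℝ)+2 := by ring
  rw [e]
  linarith

lemma entAbel (r : ℕ) (e : ℕ → ℝ) (he : ∀ k, 0 ≤ e k) (h0 : e 0 = 0) (hr : e r = 0) :
    0 ≤ ∑ k ∈ range r, entD k * (e k - e (k + 1)) := by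
  have key : ∀ n, 0 ≤ (∑ k ∈ range n, entD k * (e k - e (k + 1))) + entD n * e n := by
    intro n
    induction n with
    | zero => simp [h0]
    | succ n ih =>
      rw [Finset.sum_range_succ]
      nlinarith [mul_le_mul_of_nonneg_right (entD_mono n) (he (n + 1))]
  have := key r
  rw [hr] at this
  simpa using this

lemma entLayer {N r : ℕ} (x : Fin N → ℕ) (hx : ∀ i, x i ≤ r) :
    ∑ i, entG (x i) =
      ∑ k ∈ range r, entD k *
        (((∑ i, min (x i) (k + 1) : ℕ) : ℝ) - ((∑ i, min (x i) k : ℕ) : ℝ)) := by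
  have hterm : ∀ n, n ≤ r → entG n =
      ∑ k ∈ range r, entD k * (((min n (k + 1) : ℕ) : ℝ) - ((min n k : ℕ) : ℝ)) := by
    intro n hn
    rw [← entG_telescope n]
    have hcg : ∀ k ∈ range r,
        entD k * (((min n (k + 1) : ℕ) : ℝ) - ((min n k : ℕ) : ℝ))
          = if k < n then entD k else 0 := by
      intro k _
      rcases lt_or_ge k n with h | h
      · have h1 : min n (k + 1) = k + 1 := by omega
        have h2 : min n k = k := by omega
        rw [h1, h2]
        simp only [if_pos h]
        push_cast
        ring
      · have h1 : min n (k + 1) = n := by omega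
        have h2 : min n k = n := by omega
        rw [h1, h2]
        simp [Nat.not_lt.mpr h]
    rw [Finset.sum_congr rfl hcg, ← Finset.sum_filter]
    congr 1
    ext k
    simp only [Finset.mem_filter, Finset.mem_range]
    omega
  calc ∑ i, entG (x i)
      = ∑ i, ∑ k ∈ range r, entD k *
        (((min (x i) (k + 1) : ℕ) : ℝ) - ((min (x i) k : ℕ) : ℝ)) := by
        exact Finset.sum_congr rfl fun i _ => hterm (x i) (hx i)
    _ = ∑ k ∈ range r, ∑ i, entD k *
        (((min (x i) (k + 1) : ℕ) : ℝ) - ((min (x i) k : ℕ) : ℝ)) := Finset.sum_comm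
    _ = _ := by
        refine Finset.sum_congr rfl fun k _ => ?_
        rw [← Finset.mul_sum]
        congr 1
        push_cast
        rw [Finset.sum_sub_distrib]

lemma key_min {r m' N ℓ q d₀ t : ℕ} (ht1 : 1 ≤ t) (ht2 : t ≤ r - 1)
    (d : Fin N → ℕ) (hsum : ∑ i, d i = m') (hbound : ∀ i, d i ≤ r)
    (hexact : (Finset.univ.filter (fun i => d i = r)).card = ℓ)
    (hm : m' = r * ℓ + q * (r - 1) + d₀) :
    (ℓ + q) * t + min d₀ t ≤ ∑ i, min (d i) t := by
  classical
  set A : Finset (Fin N) := Finset.univ.filter (fun i => t ≤ d i) with hA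
  set B : Finset (Fin N) := Finset.univ.filter (fun i => d i = r) with hB
  have hBA : B ⊆ A := by
    intro i hi
    simp only [hB, Finset.mem_filter, Finset.mem_univ, true_and] at hi
    simp only [hA, Finset.mem_filter, Finset.mem_univ, true_and]
    omega
  set k := A.card with hk
  set u := ∑ i ∈ Finset.univ.filter (fun i => ¬ t ≤ d i), d i with hu
  have hℓk : ℓ ≤ k := hexact ▸ Finset.card_le_card hBA
  -- sum of mins
  have hMd : ∑ i, min (d i) t = k * t + u := by
    rw [← Finset.sum_filter_add_sum_filter_not Finset.univ (fun i => t ≤ d i)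
      (fun i => min (d i) t)]
    congr 1
    · rw [Finset.sum_congr rfl (fun i hi => ?_), Finset.sum_const, smul_eq_mul]
      simp only [hA, Finset.mem_filter, Finset.mem_univ, true_and] at hi
      omega
    · exact Finset.sum_congr rfl fun i hi => by
        simp only [Finset.mem_filter, Finset.mem_univ, true_and] at hi; omega
  -- sum over A bound
  have hsumB : ∑ i ∈ B, d i = ℓ * r := by
    rw [Finset.sum_congr rfl (fun i hi => ?_), Finset.sum_const, smul_eq_mul, hexact]
    simp only [hB, Finset.mem_filter, Finset.mem_univ, true_and] at hi
    exact hi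
  have hsumAB : ∑ i ∈ A \ B, d i ≤ (k - ℓ) * (r - 1) := by
    have hcard : (A \ B).card = k - ℓ := by
      rw [Finset.card_sdiff_of_subset hBA, hexact]
    calc ∑ i ∈ A \ B, d i ≤ ∑ _i ∈ A \ B, (r - 1) := by
          refine Finset.sum_le_sum fun i hi => ?_
          have hi2 := Finset.mem_sdiff.mp hi
          have h1 := hbound i
          have h2 : ¬ d i = r := by
            intro h
            exact hi2.2 (by simp [hB, h])
          omega
      _ = (k - ℓ) * (r - 1) := by rw [Finset.sum_const, smul_eq_mul, hcard]
  have hsplit : m' = (∑ i ∈ A, d i) + u := by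
    rw [← hsum, hu, ← Finset.sum_filter_add_sum_filter_not Finset.univ (fun i => t ≤ d i) d]
  have hsumA : ∑ i ∈ A, d i = ℓ * r + ∑ i ∈ A \ B, d i := by
    rw [← hsumB, ← Finset.sum_sdiff hBA]
    ring
  -- main inequality on m'
  have hmain : r * ℓ + q * (r - 1) + d₀ ≤ ℓ * r + (k - ℓ) * (r - 1) + u := by
    rw [← hm, hsplit, hsumA]
    omega
  rw [hMd]
  rcases le_or_gt (ℓ + q + 1) k with hcase | hcase
  · have : (ℓ + q) * t + min d₀ t ≤ (ℓ + q + 1) * t := by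
      have : min d₀ t ≤ t := min_le_right _ _
      nlinarith
    calc (ℓ + q) * t + min d₀ t ≤ (ℓ + q + 1) * t := this
      _ ≤ k * t := Nat.mul_le_mul_right t hcase
      _ ≤ k * t + u := Nat.le_add_right _ _
  · -- k ≤ ℓ + q
    obtain ⟨k', hk'⟩ : ∃ k', k = ℓ + k' := ⟨k - ℓ, by omega⟩
    obtain ⟨a, ha⟩ : ∃ a, q = k' + a := ⟨q - k', by omega⟩
    have hkl : k - ℓ = k' := by omega
    rw [hkl, ha] at hmain
    have hu2 : a * (r - 1) + d₀ ≤ u := by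
      have : (k' + a) * (r - 1) = k' * (r - 1) + a * (r - 1) := by ring
      rw [this] at hmain
      have hrl2 : r * ℓ = ℓ * r := Nat.mul_comm r ℓ
      omega
    have hat : a * t ≤ a * (r - 1) := Nat.mul_le_mul_left a ht2
    have hmin : min d₀ t ≤ d₀ := min_le_left _ _
    calc (ℓ + q) * t + min d₀ t = (ℓ + k') * t + a * t + min d₀ t := by rw [ha]; ring
      _ ≤ (ℓ + k') * t + (a * (r - 1) + d₀) := by omega
      _ ≤ (ℓ + k') * t + u := by omega
      _ = k * t + u := by rw [hk']

lemma c_min {N ℓ q : ℕ} (r d₀ t : ℕ) (hN : ℓ + q + 1 ≤ N)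
    (c : Fin N → ℕ)
    (hc : c = fun i : Fin N => if (i : ℕ) < ℓ then r
      else if (i : ℕ) < ℓ + q then r - 1
      else if (i : ℕ) = ℓ + q then d₀ else 0) :
    ∑ i, min (c i) t = ℓ * min r t + q * min (r - 1) t + min d₀ t := by
  classical
  set F : ℕ → ℕ := fun j => if j < ℓ then r
      else if j < ℓ + q then r - 1
      else if j = ℓ + q then d₀ else 0 with hF
  have hcF : ∀ i : Fin N, c i = F (i : ℕ) := by
    intro i; rw [hc]
  have h1 : ∑ i, min (c i) t = ∑ j ∈ range N, min (F j) t := by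
    rw [Finset.sum_congr rfl fun i _ => by rw [hcF i]]
    exact Fin.sum_univ_eq_sum_range (fun j => min (F j) t) N
  rw [h1]
  rw [← Finset.sum_subset (Finset.range_subset_range.mpr hN)
    (fun j _ hj => by
      simp only [Finset.mem_range, not_lt] at hj
      have : F j = 0 := by simp only [hF]; split_ifs <;> omega
      simp [this])]
  rw [Finset.sum_range_succ]
  have hlast : F (ℓ + q) = d₀ := by simp only [hF]; split_ifs <;> omega
  rw [hlast]
  congr 1
  rw [Finset.sum_range_add]
  congr 1
  · calc ∑ j ∈ range ℓ, min (F j) t = ∑ _j ∈ range ℓ, min r t := by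
          refine Finset.sum_congr rfl fun j hj => ?_
          have : j < ℓ := Finset.mem_range.mp hj
          simp only [hF]
          rw [if_pos this]
      _ = ℓ * min r t := by
          rw [Finset.sum_const, smul_eq_mul, Finset.card_range]
  · calc ∑ j ∈ range q, min (F (ℓ + j)) t = ∑ _j ∈ range q, min (r - 1) t := by
          refine Finset.sum_congr rfl fun j hj => ?_
          have hjq : j < q := Finset.mem_range.mp hj
          simp only [hF]
          rw [if_neg (by omega), if_pos (by omega)]
      _ = q * min (r - 1) t := by
          rw [Finset.sum_const, smul_eq_mul, Finset.card_range]

lemma ent_eq {N : ℕ} (m' : ℕ) (hm' : 0 < m') (x : Fin N → ℕ) (hsum : ∑ i, x i = m') :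
    ∑ i, (x i : ℝ) * Real.logb 2 ((m' : ℝ) / (x i : ℝ))
      = (m' : ℝ) * Real.logb 2 (m' : ℝ) - ∑ i, entG (x i) := by
  have hterm : ∀ i, (x i : ℝ) * Real.logb 2 ((m' : ℝ) / (x i : ℝ))
      = (x i : ℝ) * Real.logb 2 (m' : ℝ) - entG (x i) := by
    intro i
    rcases eq_or_ne (x i) 0 with h | h
    · simp [h, entG]
    · rw [Real.logb_div (Nat.cast_ne_zero.mpr hm'.ne') (Nat.cast_ne_zero.mpr h)]
      simp only [entG]; ring
  rw [Finset.sum_congr rfl fun i _ => hterm i, Finset.sum_sub_distrib, ← Finset.sum_mul]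
  congr 2
  rw [← hsum]
  push_cast
  ring

theorem min_entropy_sequence (r m' N ℓ q d₀ : ℕ)
    (hr : 2 ≤ r) (hm' : 0 < m') (hrl : r * ℓ ≤ m')
    (hq : q = (m' - r * ℓ) / (r - 1)) (hd0 : d₀ = (m' - r * ℓ) % (r - 1))
    (hN : ℓ + q + 1 ≤ N)
    (d : Fin N → ℕ) (hanti : Antitone d) (hsum : ∑ i, d i = m')
    (hbound : ∀ i, d i ≤ r)
    (hexact : (Finset.univ.filter (fun i => d i = r)).card = ℓ)
    (c : Fin N → ℕ)
    (hc : c = fun i : Fin N => if (i : ℕ) < ℓ then r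
      else if (i : ℕ) < ℓ + q then r - 1
      else if (i : ℕ) = ℓ + q then d₀ else 0) :
    ∑ i, (c i : ℝ) * Real.logb 2 ((m' : ℝ) / (c i : ℝ))
      ≤ ∑ i, (d i : ℝ) * Real.logb 2 ((m' : ℝ) / (d i : ℝ)) := by
  classical
  have hd0lt : d₀ < r - 1 := hd0 ▸ Nat.mod_lt _ (by omega)
  have hm : m' = r * ℓ + q * (r - 1) + d₀ := by
    have h := Nat.div_add_mod (m' - r * ℓ) (r - 1)
    rw [← hq, ← hd0, Nat.mul_comm] at h
    have h2 := Nat.sub_add_cancel hrl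
    omega
  have hcb : ∀ i, c i ≤ r := by
    intro i; rw [hc]; dsimp only; split_ifs <;> omega
  have hsumc : ∑ i, c i = m' := by
    have h1 := c_min r d₀ r hN c hc
    have h2 : ∀ i, min (c i) r = c i := fun i => min_eq_left (hcb i)
    rw [Finset.sum_congr rfl (fun i _ => (h2 i).symm), h1, min_self,
      min_eq_left (by omega), min_eq_left (by omega), hm]
    ring
  rw [ent_eq m' hm' d hsum, ent_eq m' hm' c hsumc]
  have goal2 : ∑ i, entG (d i) ≤ ∑ i, entG (c i) := by
    rw [entLayer d hbound, entLayer c hcb]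
    set Md : ℕ → ℕ := fun t => ∑ i, min (d i) t with hMddef
    set Mc : ℕ → ℕ := fun t => ∑ i, min (c i) t with hMcdef
    set e : ℕ → ℝ := fun t => (Md t : ℝ) - (Mc t : ℝ) with hedef
    have hMcMd : ∀ t, Mc t ≤ Md t := by
      intro t
      rcases Nat.eq_zero_or_pos t with h0 | h1
      · subst h0; simp [hMcdef, hMddef]
      rcases le_or_gt t (r - 1) with hle | hgt
      · have hkey := key_min h1 hle d hsum hbound hexact hm
        calc Mc t = ℓ * min r t + q * min (r - 1) t + min d₀ t := c_min r d₀ t hN c hc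
          _ = (ℓ + q) * t + min d₀ t := by
              rw [min_eq_right (by omega), min_eq_right hle]; ring
          _ ≤ Md t := hkey
      · have hMdt : Md t = m' := by
          rw [hMddef, ← hsum]
          exact Finset.sum_congr rfl fun i _ =>
            min_eq_left (le_trans (hbound i) (by omega))
        have hMct : Mc t = m' := by
          rw [hMcdef, ← hsumc]
          exact Finset.sum_congr rfl fun i _ =>
            min_eq_left (le_trans (hcb i) (by omega))
        omega
    have he0 : e 0 = 0 := by simp [hedef, hMcdef, hMddef]
    have her : e r = 0 := by
      have hMdr : Md r = m' := by
        rw [hMddef, ← hsum]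
        exact Finset.sum_congr rfl fun i _ => min_eq_left (hbound i)
      have hMcr : Mc r = m' := by
        rw [hMcdef, ← hsumc]
        exact Finset.sum_congr rfl fun i _ => min_eq_left (hcb i)
      simp [hedef, hMdr, hMcr]
    have habel := entAbel r e (fun k => sub_nonneg.mpr (by exact_mod_cast hMcMd k)) he0 her
    have hdiff : ∑ k ∈ range r, entD k * (e k - e (k + 1))
        = ∑ k ∈ range r, entD k * ((Mc (k + 1) : ℝ) - (Mc k : ℝ))
          - ∑ k ∈ range r, entD k * ((Md (k + 1) : ℝ) - (Md k : ℝ)) := by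
      rw [← Finset.sum_sub_distrib]
      refine Finset.sum_congr rfl fun k _ => ?_
      simp only [hedef]
      ring
    linarith [habel, hdiff ▸ habel]
  linarith
end
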